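/- arXiv:1409.6961 — 4 statements merged into one kernel-verified Lean document; each statement's English description precedes it below -/
import Mathlib

section
/- Let q be a power of a prime, m a positive integer, Q = (q^m - 1)/(q - 1), and let D be the smallest positive divisor of q - 1 such that (q - 1)/D is coprime to Q. Then the number of primitive elements ξ ∈ F_{q^m} with Tr_{F_{q^m}/F_q}(ξ) = 0 satisfies Z_{q,m,q^m-1}(0) = D·φ((q-1)/D)·( φ(Q) + Δ_0(Q) )/q = D·φ((q-1)/D)·Z_{q,m,Q}(0)/(q - 1). -/
open scoped BigOperators
open scoped Classical

/-- The canonical additive character of a finite field `F` of characteristic `p`: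
`z ↦ exp(2πi·Tr_{F/F_p}(z)/p)`. -/
noncomputable def canChar (p : ℕ) (F : Type) [Field F] [Fintype F] [CharP F p] : F → ℂ :=
  fun z => Complex.exp (2 * Real.pi * Complex.I *
    (((@Algebra.trace (ZMod p) F _ _ (ZMod.algebra F p)) z).val : ℂ) / (p : ℂ))

/-- The Gaussian period `η_k^{(d, #L)}` attached to a generator `α` of `Lˣ`:
the sum of `χ` over the cyclotomic class `α^k⟨α^d⟩`. -/
noncomputable def gaussPeriod (p : ℕ) (L : Type) [Field L] [Fintype L] [CharP L p]
    (α : Lˣ) (d : ℕ) (k : ℤ) : ℂ :=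
  ∑ x ∈ Finset.univ.filter (fun x : Lˣ => ∃ i : ℕ, x = α ^ k * (α ^ d) ^ i),
    canChar p L (x : L)

/-- `Δ_k(N) = ∑_{d ∣ N} μ(d)·η_k^{(d, #L)}`. -/
noncomputable def DeltaSum (p : ℕ) (L : Type) [Field L] [Fintype L] [CharP L p]
    (α : Lˣ) (N : ℕ) (k : ℤ) : ℂ :=
  ∑ d ∈ N.divisors, ((ArithmeticFunction.moebius d : ℤ) : ℂ) * gaussPeriod p L α d k

/-- `ξ` is `N`-free (w.r.t. the fixed generator `α`): `ξ = α^k` for some `k` coprime to `N`. -/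
def IsNFree {G : Type} [Group G] (α ξ : G) (N : ℕ) : Prop :=
  ∃ k : ℕ, Nat.Coprime k N ∧ ξ = α ^ k

/-- `Z_{q,m,N}(c)`: the number of `N`-free elements of `Lˣ` with trace (to `K`) equal to `c`. -/
noncomputable def Zcount (K L : Type) [Field K] [Field L] [Algebra K L]
    (α : Lˣ) (N : ℕ) (c : K) : ℕ :=
  {ξ : Lˣ | IsNFree α ξ N ∧ Algebra.trace K L (ξ : L) = c}.ncard

/-- `P_{q,m,N}(c)`: the number of elements of `Lˣ` of multiplicative order exactly `N`
with trace (to `K`) equal to `c`. -/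
noncomputable def Pcount (K L : Type) [Field K] [Field L] [Algebra K L]
    (N : ℕ) (c : K) : ℕ :=
  {ξ : Lˣ | orderOf ξ = N ∧ Algebra.trace K L (ξ : L) = c}.ncard

/-- The radical of `n`: the product of the distinct prime factors of `n`. -/
def Rad (n : ℕ) : ℕ := ∏ ℓ ∈ n.primeFactors, ℓ

/-- `f_k(N, c, Δ) = ∑_{i=0}^{q-2} conj(χ_q(β^i·c))·Δ_{Qi+k}(N)`, where `β ∈ K` corresponds
to `α^Q` (a generator of `Kˣ`). -/
noncomputable def fsum (p : ℕ) (K L : Type) [Field K] [Fintype K] [CharP K p]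
    [Field L] [Fintype L] [CharP L p]
    (α : Lˣ) (β : K) (q Q N : ℕ) (c : K) (k : ℤ) : ℂ :=
  ∑ i ∈ Finset.range (q - 1),
    (starRingEnd ℂ) (canChar p K (β ^ i * c)) * DeltaSum p L α N ((Q * i : ℕ) + k)

/-!
Write the units of `L` as `α ^ (r + Q * j)` with `r < Q` and `j < q - 1`. The powers of `α ^ Q`
are exactly the image of `Kˣ`, so `Tr (α ^ (r + Q * j)) = α ^ (Q * j) • Tr (α ^ r)`: the trace
condition only depends on `r`, and so does coprimality to `Q`. Minimality of `D` forces every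
prime factor of `D` to divide `Q`, hence `k` is coprime to `q ^ m - 1 = Q * D * M`, where
`M = (q - 1) / D`, iff it is coprime to `Q` and to `M`. As `Q` is invertible modulo `M`, for
each `r` exactly `D * φ M` of the `j < q - 1` make `r + Q * j` coprime to `M`. Thus both counts
are multiples of `A = #{r < Q | gcd(r, Q) = 1, Tr (α ^ r) = 0}`: `Z(0) = D φ(M) A` and
`Z_Q(0) = (q - 1) A`. On the character side, Möbius inversion turns `Δ_0(Q)` into the sum of `χ`
over the `Q`-free units, and summing `χ` over a coset `α ^ r Kˣ` gives `q [Tr (α ^ r) = 0] - 1`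
by orthogonality, so `φ(Q) + Δ_0(Q) = q A`.
-/

open Finset

section Arithmetic

theorem Finset.sum_range_mul_eq_sum_sum {M : Type*} [AddCommMonoid M] (Q R : ℕ) (f : ℕ → M) :
    ∑ k ∈ range (Q * R), f k = ∑ r ∈ range Q, ∑ j ∈ range R, f (r + Q * j) := by
  rw [Finset.sum_comm]
  induction R with
  | zero => simp
  | succ R ih =>
    rw [Nat.mul_succ, sum_range_add, ih, sum_range_succ]
    simp only [add_comm]

theorem card_filter_range_mul_and {Q R c : ℕ} {P C : ℕ → Prop} [DecidablePred P]
    [DecidablePred C] (hP : ∀ r j, P (r + Q * j) ↔ P r)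
    (hC : ∀ r, #{j ∈ range R | C (r + Q * j)} = c) :
    #{k ∈ range (Q * R) | P k ∧ C k} = c * #{r ∈ range Q | P r} := by
  have hfiber : ∀ r,
      #{j ∈ range R | P (r + Q * j) ∧ C (r + Q * j)} = if P r then c else 0 := by
    intro r
    split_ifs with h <;> simp [hP, h, hC]
  rw [card_filter, Finset.sum_range_mul_eq_sum_sum]
  simp_rw [← card_filter, hfiber]
  rw [sum_ite, sum_const_zero, sum_const, smul_eq_mul, add_zero, mul_comm]

theorem card_filter_range_coprime_add_mul {Q M : ℕ} (hQM : Nat.Coprime Q M) (r : ℕ) :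
    #{a ∈ range M | Nat.Coprime (r + Q * a) M} = M.totient := by
  set f : ℕ → ℕ := fun a => (r + Q * a) % M
  have hinj : Set.InjOn f (range M) := by
    intro a ha b hb hab
    have : Q * a ≡ Q * b [MOD M] := Nat.ModEq.add_left_cancel' r hab
    exact (this.cancel_left_of_coprime hQM.symm).eq_of_lt_of_lt (by simpa using ha)
      (by simpa using hb)
  have himage : (range M).image f = range M := by
    refine eq_of_subset_of_card_le (fun x hx => ?_) (card_image_of_injOn hinj).ge
    obtain ⟨a, ha, rfl⟩ := mem_image.mp hx
    exact mem_range.mpr (Nat.mod_lt _ (by simp at ha; omega))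
  calc #{a ∈ range M | Nat.Coprime (r + Q * a) M} = #{a ∈ range M | Nat.Coprime (f a) M} := by
        simp only [f, ZMod.coprime_mod_iff_coprime]
    _ = #{x ∈ (range M).image f | Nat.Coprime x M} := by
        rw [filter_image, card_image_of_injOn (hinj.mono (filter_subset _ _))]
    _ = M.totient := by
        rw [himage, Nat.totient_eq_card_coprime]; simp only [Nat.coprime_comm]

theorem card_filter_range_mul_coprime_add_mul {Q M : ℕ} (hQM : Nat.Coprime Q M) (r D : ℕ) :
    #{j ∈ range (M * D) | Nat.Coprime (r + Q * j) M} = D * M.totient := by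
  have hperiodic : ∀ a b, Nat.Coprime (r + Q * (a + M * b)) M ↔ Nat.Coprime (r + Q * a) M := by
    intro a b
    rw [show r + Q * (a + M * b) = r + Q * a + M * (Q * b) by ring,
      Nat.coprime_add_mul_left_left]
  have := card_filter_range_mul_and (Q := M) (R := D) (P := fun j => Nat.Coprime (r + Q * j) M)
    (C := fun _ => True) hperiodic (c := D) (by simp)
  simpa [card_filter_range_coprime_add_mul hQM] using this

theorem prime_dvd_of_minimal_of_dvd {n Q D ℓ : ℕ} (hD0 : 0 < D) (hDn : D ∣ n)
    (hcop : Nat.Coprime (n / D) Q)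
    (hmin : ∀ D', 0 < D' → D' ∣ n → Nat.Coprime (n / D') Q → D ≤ D')
    (hℓ : ℓ.Prime) (hℓD : ℓ ∣ D) : ℓ ∣ Q := by
  by_contra hℓQ
  obtain ⟨D', rfl⟩ := hℓD
  have hD'0 : 0 < D' := Nat.pos_of_mul_pos_left hD0
  have hdiv : n / D' = ℓ * (n / (ℓ * D')) := by
    obtain ⟨t, rfl⟩ := hDn
    rw [Nat.mul_div_cancel_left t hD0, show ℓ * D' * t = D' * (ℓ * t) by ring,
      Nat.mul_div_cancel_left _ hD'0]
  have hle := hmin D' hD'0 (dvd_of_mul_left_dvd hDn)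
    (hdiv ▸ Nat.Coprime.mul_left ((Nat.Prime.coprime_iff_not_dvd hℓ).mpr hℓQ) hcop)
  nlinarith [hℓ.two_le]

theorem coprime_mul_mul_iff_of_prime_dvd {k Q D M : ℕ}
    (h : ∀ ℓ, ℓ.Prime → ℓ ∣ D → ℓ ∣ Q) :
    Nat.Coprime k (Q * (D * M)) ↔ Nat.Coprime k Q ∧ Nat.Coprime k M := by
  simp only [Nat.coprime_mul_iff_right, and_congr_right_iff, and_iff_right_iff_imp]
  intro hkQ _
  exact Nat.coprime_of_dvd fun ℓ hℓ hℓk hℓD => hℓ.not_dvd_one <|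
    hkQ ▸ Nat.dvd_gcd hℓk (h ℓ hℓ hℓD)

theorem sum_moebius_divisors_filter_dvd {R : Type*} [Ring R] {N : ℕ} (hN : N ≠ 0) (k : ℕ) :
    ∑ d ∈ N.divisors with d ∣ k, (ArithmeticFunction.moebius d : R) =
      if Nat.Coprime k N then 1 else 0 := by
  have hfilter : {d ∈ N.divisors | d ∣ k} = (N.gcd k).divisors := by
    rw [← Nat.divisors_filter_dvd_of_dvd hN (Nat.gcd_dvd_left N k)]
    refine filter_congr fun d hd => ?_
    rw [Nat.dvd_gcd_iff, and_iff_right (Nat.dvd_of_mem_divisors hd)]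
  simp only [hfilter, ← ArithmeticFunction.intCoe_apply]
  rw [← ArithmeticFunction.coe_mul_zeta_apply, ArithmeticFunction.coe_moebius_mul_coe_zeta,
    ArithmeticFunction.one_apply]
  exact if_congr Nat.coprime_comm rfl rfl

end Arithmetic

section CyclicGroup

variable {G : Type*} [Group G] {g : G}

theorem Finset.sum_range_orderOf_pow [Fintype G] {M : Type*} [AddCommMonoid M]
    (hg : orderOf g = Fintype.card G) (f : G → M) :
    ∑ k ∈ range (orderOf g), f (g ^ k) = ∑ x, f x := by
  have hinj : Set.InjOn (g ^ ·) (range (orderOf g)) := by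
    simpa only [coe_range] using pow_injOn_Iio_orderOf
  have himage : (range (orderOf g)).image (g ^ ·) = univ :=
    eq_univ_of_card _ (by rw [card_image_of_injOn hinj, card_range, hg])
  rw [← sum_image hinj, himage]

theorem exists_pow_eq_pow_pow_iff_dvd {d k : ℕ} (hd : d ∣ orderOf g) :
    (∃ i : ℕ, g ^ k = (g ^ d) ^ i) ↔ d ∣ k := by
  refine ⟨fun ⟨i, hi⟩ => ?_, fun ⟨i, hi⟩ => ⟨i, by rw [hi, pow_mul]⟩⟩
  rw [← pow_mul, pow_eq_pow_iff_modEq] at hi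
  exact ((hi.of_dvd hd).dvd_iff dvd_rfl).mpr (dvd_mul_right d i)

end CyclicGroup

theorem isNFree_pow_iff {G : Type} [Group G] {g : G} {N k : ℕ} (hN : N ∣ orderOf g) :
    IsNFree g (g ^ k) N ↔ Nat.Coprime k N := by
  refine ⟨fun ⟨j, hj, hjk⟩ => ?_, fun h => ⟨k, h, rfl⟩⟩
  rw [pow_eq_pow_iff_modEq] at hjk
  rwa [Nat.Coprime, (hjk.of_dvd hN).gcd_eq]

section FiniteField

variable {K L : Type*} [Field K] [Fintype K] [Field L] [Algebra K L]

open Polynomial in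
theorem exists_algebraMap_eq_of_pow_card_eq {y : L} (hy : y ^ Fintype.card K = y) :
    ∃ b : K, algebraMap K L b = y := by
  have hq := Fintype.one_lt_card (α := K)
  have hroots := FiniteField.roots_X_pow_card_sub_X K
  have hmap := roots_map_of_injective_of_card_eq_natDegree (algebraMap K L).injective
    (p := X ^ Fintype.card K - X)
    (by rw [hroots, FiniteField.X_pow_card_sub_X_natDegree_eq K hq]; rfl)
  have hy' : y ∈ (map (algebraMap K L) (X ^ Fintype.card K - X)).roots := by
    rw [Polynomial.map_sub, Polynomial.map_pow, map_X,
      mem_roots (FiniteField.X_pow_card_sub_X_ne_zero L hq)]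
    simp [hy]
  rw [← hmap, hroots] at hy'
  obtain ⟨b, -, hb⟩ := Multiset.mem_map.mp hy'
  exact ⟨b, hb⟩

theorem exists_units_map_eq_of_pow_card_sub_one_eq_one {u : Lˣ}
    (hu : u ^ (Fintype.card K - 1) = 1) :
    ∃ β : Kˣ, Units.map (algebraMap K L : K →* L) β = u := by
  have hcard : (u : L) ^ Fintype.card K = u := by
    rw [← Nat.sub_add_cancel Fintype.card_pos, pow_succ, ← Units.val_pow_eq_pow_val, hu,
      Units.val_one, one_mul]
  obtain ⟨b, hb⟩ := exists_algebraMap_eq_of_pow_card_eq hcard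
  have hb0 : b ≠ 0 := by rintro rfl; exact u.ne_zero (by simpa using hb.symm)
  exact ⟨Units.mk0 b hb0, Units.ext hb⟩

theorem exists_orderOf_eq_and_pow_add_mul_eq [Fintype L] {α : Lˣ} {Q : ℕ}
    (hαQ : orderOf α = Q * (Fintype.card K - 1)) :
    ∃ β : Kˣ, orderOf β = Fintype.card K - 1 ∧
      ∀ r j : ℕ,
        ((α ^ (r + Q * j) : Lˣ) : L) = algebraMap K L (β ^ j : Kˣ) * (α ^ r : Lˣ) := by
  have hQ0 : Q ≠ 0 := by rintro rfl; exact (orderOf_pos α).ne' (by simpa using hαQ)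
  obtain ⟨β, hβ⟩ := exists_units_map_eq_of_pow_card_sub_one_eq_one (K := K) (u := α ^ Q)
    (by rw [← pow_mul, ← hαQ, pow_orderOf_eq_one])
  refine ⟨β, ?_, fun r j => ?_⟩
  · rw [← orderOf_injective (Units.map (algebraMap K L : K →* L))
      (Units.map_injective (algebraMap K L).injective) β, hβ,
      orderOf_pow_of_dvd hQ0 (hαQ ▸ dvd_mul_right Q _), hαQ,
      Nat.mul_div_cancel_left _ (Nat.pos_of_ne_zero hQ0)]
  · rw [pow_add, pow_mul, ← hβ, ← map_pow, mul_comm]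
    rfl

end FiniteField

section Character

variable (p : ℕ) [Fact p.Prime]

theorem canChar_zero (F : Type) [Field F] [Fintype F] [CharP F p] : canChar p F 0 = 1 := by
  simp [canChar]

theorem sum_canChar_mul (F : Type) [Field F] [Fintype F] [CharP F p] (c : F) :
    ∑ x : F, canChar p F (x * c) = if c = 0 then (Fintype.card F : ℂ) else 0 := by
  let _ := ZMod.algebra F p
  let ψ : AddChar F ℂ :=
    ZMod.stdAddChar.compAddMonoidHom (Algebra.trace (ZMod p) F).toAddMonoidHom
  have hψ : ∀ z, ψ z = canChar p F z := fun z => by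
    rw [AddChar.compAddMonoidHom_apply, ZMod.stdAddChar_apply, ZMod.toCircle_apply]
    rfl
  have hprim : ψ.IsPrimitive := by
    refine AddChar.IsPrimitive.of_ne_one fun h => ?_
    obtain ⟨z, hz⟩ := Algebra.trace_surjective (ZMod p) F 1
    have h1 : ZMod.stdAddChar (N := p) 1 = ZMod.stdAddChar (0 : ZMod p) := by
      rw [AddChar.map_zero_eq_one, ← hz]
      exact DFunLike.congr_fun h z
    exact one_ne_zero (ZMod.injective_stdAddChar h1)
  simpa only [hψ, Nat.cast_ite, Nat.cast_zero] using AddChar.sum_mulShift c hprim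

variable {K L : Type} [Field K] [Fintype K] [Field L] [Fintype L] [Algebra K L]

theorem canChar_algebraMap_mul [CharP K p] [CharP L p] (x : K) (ξ : L) :
    canChar p L (algebraMap K L x * ξ) = canChar p K (x * Algebra.trace K L ξ) := by
  let _ := ZMod.algebra K p
  let _ := ZMod.algebra L p
  have : IsScalarTower (ZMod p) K L := IsScalarTower.of_algebraMap_eq' (RingHom.ext_zmod _ _)
  simp only [canChar]
  rw [← Algebra.trace_trace (R := ZMod p) (S := K), ← Algebra.smul_def, map_smul, smul_eq_mul]

theorem sum_units_canChar_algebraMap_mul [CharP L p] (ξ : L) :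
    ∑ u : Kˣ, canChar p L (algebraMap K L u * ξ) =
      (if Algebra.trace K L ξ = 0 then (Fintype.card K : ℂ) else 0) - 1 := by
  have : CharP K p := (Algebra.charP_iff K L p).mpr inferInstance
  rw [← sum_canChar_mul p K,
    Fintype.sum_eq_add_sum_subtype_ne (fun x : K => canChar p K (x * Algebra.trace K L ξ)) 0,
    zero_mul, canChar_zero, add_sub_cancel_left]
  simp only [canChar_algebraMap_mul]
  exact Fintype.sum_equiv unitsEquivNeZero _ _ fun _ => rfl

end Character

section Exponents

variable {K L : Type} [Field K] [Field L] [Fintype L] [Algebra K L] {α : Lˣ}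

theorem zcount_eq_card_filter_range (hα : orderOf α = Fintype.card Lˣ) {N : ℕ}
    (hN : N ∣ orderOf α) (c : K) :
    Zcount K L α N c =
      #{k ∈ range (orderOf α) | k.Coprime N ∧ Algebra.trace K L ((α ^ k : Lˣ) : L) = c} := by
  rw [Zcount, Set.ncard_eq_toFinset_card', Set.toFinset_ofPred, card_filter, card_filter,
    ← sum_range_orderOf_pow hα]
  simp only [isNFree_pow_iff hN]

theorem gaussPeriod_zero_eq_sum_range {p : ℕ} [CharP L p] (hα : orderOf α = Fintype.card Lˣ)
    {d : ℕ} (hd : d ∣ orderOf α) :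
    gaussPeriod p L α d 0 =
      ∑ k ∈ range (orderOf α), if d ∣ k then canChar p L (α ^ k : Lˣ) else 0 := by
  rw [gaussPeriod, sum_filter, ← sum_range_orderOf_pow hα]
  simp only [zpow_zero, one_mul, exists_pow_eq_pow_pow_iff_dvd hd]

theorem deltaSum_zero_eq_sum_range {p : ℕ} [CharP L p] (hα : orderOf α = Fintype.card Lˣ)
    {N : ℕ} (hN0 : N ≠ 0) (hN : N ∣ orderOf α) :
    DeltaSum p L α N 0 =
      ∑ k ∈ range (orderOf α), if k.Coprime N then canChar p L (α ^ k : Lˣ) else 0 := by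
  rw [DeltaSum, sum_congr rfl fun d hd => by
    rw [gaussPeriod_zero_eq_sum_range hα ((Nat.dvd_of_mem_divisors hd).trans hN)]]
  simp_rw [mul_sum]
  rw [sum_comm]
  refine sum_congr rfl fun k _ => ?_
  simp_rw [mul_ite, mul_zero]
  rw [← sum_filter, ← sum_mul, sum_moebius_divisors_filter_dvd hN0, ite_mul, one_mul, zero_mul]

noncomputable def coprimeTraceZeroExponents (K L : Type) [Field K] [Field L] [Algebra K L]
    (α : Lˣ) (Q : ℕ) : Finset ℕ :=
  {r ∈ range Q | r.Coprime Q ∧ Algebra.trace K L ((α ^ r : Lˣ) : L) = 0}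

variable [Fintype K] {Q : ℕ}

theorem trace_pow_add_mul_eq_zero_iff (hαQ : orderOf α = Q * (Fintype.card K - 1)) (r j : ℕ) :
    Algebra.trace K L ((α ^ (r + Q * j) : Lˣ) : L) = 0 ↔
      Algebra.trace K L ((α ^ r : Lˣ) : L) = 0 := by
  obtain ⟨β, -, hβ⟩ := exists_orderOf_eq_and_pow_add_mul_eq hαQ
  rw [hβ, ← Algebra.smul_def, map_smul, smul_eq_mul, mul_eq_zero, or_iff_right (β ^ j).ne_zero]

theorem sum_range_canChar_pow_add_mul {p : ℕ} [Fact p.Prime] [CharP L p]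
    (hαQ : orderOf α = Q * (Fintype.card K - 1)) (r : ℕ) :
    ∑ j ∈ range (Fintype.card K - 1), canChar p L (α ^ (r + Q * j) : Lˣ) =
      (if Algebra.trace K L ((α ^ r : Lˣ) : L) = 0 then (Fintype.card K : ℂ) else 0) - 1 := by
  obtain ⟨β, hβ, hpow⟩ := exists_orderOf_eq_and_pow_add_mul_eq hαQ
  simp only [hpow]
  rw [← hβ, sum_range_orderOf_pow (by rw [hβ, Fintype.card_units])
    (fun u : Kˣ => canChar p L (algebraMap K L u * (α ^ r : Lˣ))),
    sum_units_canChar_algebraMap_mul]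

theorem zcount_eq_mul_card (hα : orderOf α = Fintype.card Lˣ)
    (hαQ : orderOf α = Q * (Fintype.card K - 1)) :
    Zcount K L α Q 0 = (Fintype.card K - 1) * #(coprimeTraceZeroExponents K L α Q) := by
  rw [zcount_eq_card_filter_range hα (hαQ ▸ dvd_mul_right Q _), hαQ]
  have := card_filter_range_mul_and (Q := Q) (R := Fintype.card K - 1)
    (P := fun k => k.Coprime Q ∧ Algebra.trace K L ((α ^ k : Lˣ) : L) = 0) (C := fun _ => True)
    (c := Fintype.card K - 1)
    (fun r j => by rw [Nat.coprime_add_mul_left_left, trace_pow_add_mul_eq_zero_iff hαQ])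
    (by simp)
  simpa [coprimeTraceZeroExponents] using this

theorem zcount_orderOf_eq_mul_card (hα : orderOf α = Fintype.card Lˣ)
    (hαQ : orderOf α = Q * (Fintype.card K - 1)) {D M : ℕ} (hDM : Fintype.card K - 1 = D * M)
    (hMQ : M.Coprime Q) (hDQ : ∀ ℓ, ℓ.Prime → ℓ ∣ D → ℓ ∣ Q) :
    Zcount K L α (orderOf α) 0 = D * M.totient * #(coprimeTraceZeroExponents K L α Q) := by
  rw [zcount_eq_card_filter_range hα dvd_rfl]
  have hsplit : ∀ k, (k.Coprime (orderOf α) ∧ Algebra.trace K L ((α ^ k : Lˣ) : L) = 0) ↔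
      (k.Coprime Q ∧ Algebra.trace K L ((α ^ k : Lˣ) : L) = 0) ∧ k.Coprime M := by
    intro k
    rw [hαQ, hDM, coprime_mul_mul_iff_of_prime_dvd hDQ]
    tauto
  simp only [hsplit]
  rw [hαQ, card_filter_range_mul_and (c := D * M.totient)
    (fun r j => by rw [Nat.coprime_add_mul_left_left, trace_pow_add_mul_eq_zero_iff hαQ])
    (fun r => by rw [hDM, mul_comm D M]; exact card_filter_range_mul_coprime_add_mul hMQ.symm r D),
    coprimeTraceZeroExponents]

theorem totient_add_deltaSum_eq_mul_card {p : ℕ} [Fact p.Prime] [CharP L p]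
    (hα : orderOf α = Fintype.card Lˣ) (hαQ : orderOf α = Q * (Fintype.card K - 1)) :
    (Q.totient : ℂ) + DeltaSum p L α Q 0 =
      Fintype.card K * #(coprimeTraceZeroExponents K L α Q) := by
  have hQ0 : Q ≠ 0 := by rintro rfl; exact (orderOf_pos α).ne' (by simpa using hαQ)
  rw [deltaSum_zero_eq_sum_range hα hQ0 (hαQ ▸ dvd_mul_right Q _), hαQ,
    sum_range_mul_eq_sum_sum]
  simp only [Nat.coprime_add_mul_left_left, ← ite_sum_zero, sum_range_canChar_pow_add_mul hαQ]
  rw [← sum_filter, sum_sub_distrib, ← sum_filter, filter_filter, sum_const, sum_const,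
    nsmul_eq_mul, nsmul_eq_mul, mul_one, Nat.totient_eq_card_coprime,
    filter_congr fun r _ => Nat.coprime_comm]
  rw [coprimeTraceZeroExponents]
  ring

end Exponents

theorem stmt_15_general (p m q Q D : ℕ) [Fact p.Prime] (hQ : Q = (q ^ m - 1) / (q - 1))
    (K L : Type) [Field K] [Fintype K] [Field L] [Fintype L] [Algebra K L] [CharP L p]
    (hK : Fintype.card K = q) (hL : Fintype.card L = q ^ m)
    (α : Lˣ) (hα : ∀ x : Lˣ, x ∈ Subgroup.zpowers α)
    (hD0 : 0 < D) (hD1 : D ∣ q - 1) (hD2 : Nat.Coprime ((q - 1) / D) Q)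
    (hDmin : ∀ D' : ℕ, 0 < D' → D' ∣ q - 1 → Nat.Coprime ((q - 1) / D') Q → D ≤ D') :
    (Zcount K L α (q ^ m - 1) (0 : K) : ℂ) =
      (D : ℂ) * (Nat.totient ((q - 1) / D) : ℂ) *
        ((Nat.totient Q : ℂ) + DeltaSum p L α Q 0) / (q : ℂ) ∧
    (Zcount K L α (q ^ m - 1) (0 : K) : ℂ) =
      (D : ℂ) * (Nat.totient ((q - 1) / D) : ℂ) *
        (Zcount K L α Q (0 : K) : ℂ) / ((q : ℂ) - 1) := by
  have hq1 : 1 < q := hK ▸ Fintype.one_lt_card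
  have hord : orderOf α = Fintype.card Lˣ := by
    rw [orderOf_eq_card_of_forall_mem_zpowers hα, Nat.card_eq_fintype_card]
  have hαn : orderOf α = q ^ m - 1 := by rw [hord, Fintype.card_units, hL]
  have hαQ : orderOf α = Q * (Fintype.card K - 1) := by
    rw [hαn, hK, hQ, Nat.div_mul_cancel (by simpa using Nat.sub_dvd_pow_sub_pow q 1 m)]
  have hZ := zcount_orderOf_eq_mul_card hord hαQ (hK ▸ (Nat.mul_div_cancel' hD1).symm) hD2
    fun ℓ hℓ hℓD => prime_dvd_of_minimal_of_dvd hD0 hD1 hD2 hDmin hℓ hℓD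
  have hZQ := zcount_eq_mul_card hord hαQ
  have hΔ := totient_add_deltaSum_eq_mul_card (p := p) hord hαQ
  rw [hαn] at hZ
  rw [hK] at hZQ hΔ
  have hq0 : (q : ℂ) ≠ 0 := by exact_mod_cast (by omega : q ≠ 0)
  have hq1' : (q : ℂ) - 1 ≠ 0 := by
    rw [sub_ne_zero]; exact_mod_cast (by omega : q ≠ 1)
  refine ⟨?_, ?_⟩
  · rw [hZ, hΔ]; push_cast; field_simp
  · rw [hZ, hZQ]; push_cast [Nat.cast_sub hq1.le]; field_simp

/-- the number of primitive elements with trace zero. -/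
theorem stmt_15 (p s m q Q D : ℕ) [Fact p.Prime] (hs : 0 < s) (hm : 0 < m)
    (hq : q = p ^ s) (hQ : Q = (q ^ m - 1) / (q - 1))
    (K L : Type) [Field K] [Fintype K] [Field L] [Fintype L] [Algebra K L] [CharP L p]
    (hK : Fintype.card K = q) (hL : Fintype.card L = q ^ m)
    (α : Lˣ) (hα : ∀ x : Lˣ, x ∈ Subgroup.zpowers α)
    (hD0 : 0 < D) (hD1 : D ∣ q - 1) (hD2 : Nat.Coprime ((q - 1) / D) Q)
    (hDmin : ∀ D' : ℕ, 0 < D' → D' ∣ q - 1 → Nat.Coprime ((q - 1) / D') Q → D ≤ D') :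
    (Zcount K L α (q ^ m - 1) (0 : K) : ℂ) =
      (D : ℂ) * (Nat.totient ((q - 1) / D) : ℂ) *
        ((Nat.totient Q : ℂ) + DeltaSum p L α Q 0) / (q : ℂ) ∧
    (Zcount K L α (q ^ m - 1) (0 : K) : ℂ) =
      (D : ℂ) * (Nat.totient ((q - 1) / D) : ℂ) *
        (Zcount K L α Q (0 : K) : ℂ) / ((q : ℂ) - 1) :=
  stmt_15_general p m q Q D hQ K L hK hL α hα hD0 hD1 hD2 hDmin
end

section
/- Let b and m be integers with b > 1 and m > 1. Then Rad(b^m - 1) = Rad((b^m - 1)/(b - 1)) if and only if every prime factor of b - 1 divides m. -/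
open scoped BigOperators
open scoped Classical

/-!
Write `b ^ m - 1 = (b - 1) * S` with `S = 1 + b + ⋯ + b ^ (m - 1)`. The two radicals agree
exactly when every prime factor of `b - 1` already divides `S`, and since `b ≡ 1` modulo
`b - 1` we have `S ≡ m` modulo `b - 1`, so a prime dividing `b - 1` divides `S` iff it divides `m`.
-/

open Finset

theorem rad_eq_rad_iff {x y : ℕ} : Rad x = Rad y ↔ x.primeFactors = y.primeFactors := by
  refine ⟨fun h => ?_, fun h => by rw [Rad, Rad, h]⟩
  simpa only [Rad, Nat.primeFactors_prod_primeFactors] using congrArg Nat.primeFactors h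

theorem Nat.primeFactors_mul_eq_right_iff {a s : ℕ} (ha : a ≠ 0) :
    (a * s).primeFactors = s.primeFactors ↔ ∀ p, p.Prime → p ∣ a → p ∣ s := by
  rcases eq_or_ne s 0 with rfl | hs
  · simp
  rw [Nat.primeFactors_mul ha hs, Finset.union_eq_right]
  refine ⟨fun h p hp hpa => ?_, fun h p hpa => ?_⟩
  · exact Nat.dvd_of_mem_primeFactors (h (Nat.mem_primeFactors.mpr ⟨hp, hpa, ha⟩))
  · obtain ⟨hp, hpa, -⟩ := Nat.mem_primeFactors.mp hpa
    exact Nat.mem_primeFactors.mpr ⟨hp, h p hp hpa, hs⟩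

theorem Nat.geom_sum_modEq_sub_one {b : ℕ} (hb : 1 ≤ b) (n : ℕ) :
    ∑ i ∈ range n, b ^ i ≡ n [MOD b - 1] :=
  calc ∑ i ∈ range n, b ^ i ≡ ∑ _i ∈ range n, 1 [MOD b - 1] :=
        Nat.ModEq.sum fun i _ => by simpa using (Nat.modEq_sub hb).pow i
    _ = n := by simp

theorem stmt_16_general (b m : ℕ) (hb : 1 < b) :
    Rad (b ^ m - 1) = Rad ((b ^ m - 1) / (b - 1)) ↔
      ∀ ℓ : ℕ, ℓ.Prime → ℓ ∣ b - 1 → ℓ ∣ m := by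
  have hfactor : b ^ m - 1 = (b - 1) * ((b ^ m - 1) / (b - 1)) :=
    (Nat.mul_div_cancel' (Nat.sub_one_dvd_pow_sub_one b m)).symm
  have hS : (b ^ m - 1) / (b - 1) ≡ m [MOD b - 1] := by
    rw [← Nat.geomSum_eq hb]
    exact Nat.geom_sum_modEq_sub_one hb.le m
  set S := (b ^ m - 1) / (b - 1)
  rw [hfactor, rad_eq_rad_iff, Nat.primeFactors_mul_eq_right_iff (by omega)]
  exact forall₃_congr fun ℓ _ hℓ => hS.dvd_iff hℓ

/-- `Rad(b^m - 1) = Rad((b^m-1)/(b-1))` iff every prime factor of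
`b - 1` divides `m`. -/
theorem stmt_16 (b m : ℕ) (hb : 1 < b) (hm : 1 < m) :
    Rad (b ^ m - 1) = Rad ((b ^ m - 1) / (b - 1)) ↔
      ∀ ℓ : ℕ, ℓ.Prime → ℓ ∣ b - 1 → ℓ ∣ m :=
  stmt_16_general b m hb
end

section
/- Let q be a power of a prime, m a positive integer, Q = (q^m - 1)/(q - 1), and let D be the smallest positive divisor of q - 1 such that (q - 1)/D is coprime to Q. Let N be a positive divisor of q^m - 1 with DQ | N. Then Z_{q,m,N}(0) = ((q^m - 1)/N)·P_{q,m,N}(0). In particular, P_{q,m,q^m-1}(0) = ( φ(q^m - 1)/φ(DQ) )·P_{q,m,DQ}(0). -/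
open scoped BigOperators
open scoped Classical

/-! The condition `Tr(ξ) = 0` is invariant under multiplication by `Kˣ = (Lˣ)^Q`, so for
`ξ = α^k` it only depends on `k mod Q`. Write `q^m - 1 = N e`; then `e ∣ (q - 1)/D` is prime to
`Q`, so some `u ≡ e (mod Q)` is prime to `q^m - 1`, and `ξ ↦ ξ^u` is a bijection of `Lˣ` that
turns the condition on `ξ` into the same condition on `ξ^e`. An element `ξ` is `N`-free exactly
when `ξ^e` has order `N`, and `ξ ↦ ξ^e` is `e`-to-one onto the elements of order dividing `N`,
which gives the first identity. For the second, take `N = DQ` and apply the same twist to the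
generators: via `ξ ↦ ξ^e`, the generators `α^u`, `u ∈ (ℤ/(q^m-1))ˣ`, are spread evenly over the
elements `(α^e)^v`, `v ∈ (ℤ/DQ)ˣ`, of order `DQ`, because the reduction map
`(ℤ/(q^m-1))ˣ → (ℤ/DQ)ˣ` is a surjective homomorphism. -/

open Finset

theorem Nat.exists_coprime_modEq {Q M e : ℕ} (hM : M ≠ 0) (hQM : Q ∣ M) (he : e.Coprime Q) :
    ∃ u, u.Coprime M ∧ u ≡ e [MOD Q] := by
  have : NeZero M := ⟨hM⟩
  obtain ⟨U, hU⟩ := ZMod.unitsMap_surjective hQM (ZMod.unitOfCoprime e he)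
  refine ⟨(U : ZMod M).val, ZMod.val_coe_unit_coprime U, ?_⟩
  rw [← ZMod.natCast_eq_natCast_iff, ZMod.natCast_val, ← ZMod.unitsMap_val hQM, hU,
    ZMod.coe_unitOfCoprime]

theorem Nat.coprime_of_mul_dvd_of_mul_eq {c D Q N e : ℕ} (hc : (c / D).Coprime Q) (hQ : Q ≠ 0)
    (hDQN : D * Q ∣ N) (hNe : N * e = Q * c) : e.Coprime Q := by
  obtain ⟨t, rfl⟩ := hDQN
  refine hc.coprime_dvd_left (Nat.dvd_div_of_mul_dvd ⟨t, Nat.eq_of_mul_eq_mul_left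
    (Nat.pos_of_ne_zero hQ) ?_⟩)
  rw [← hNe]
  ring

theorem MonoidHom.card_filter_comp_eq {A B : Type*} [Group A] [Fintype A] [Group B] [Fintype B]
    (f : A →* B) (T : B → Prop) [DecidablePred T] (hT : ∀ b, T b → b ∈ f.range) :
    #{a | T (f a)} = Nat.card f.ker * #{b | T b} := by
  have hker : Nat.card f.ker = #{a | f a = 1} := by
    rw [Nat.card_eq_fintype_card, ← Fintype.card_subtype]
    exact Fintype.card_congr (Equiv.subtypeEquivRight fun a => f.mem_ker)
  have hfiber : ∀ b ∈ ({b | T b} : Finset B), #{a ∈ {a | T (f a)} | f a = b} = Nat.card f.ker := by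
    intro b hb
    rw [mem_filter] at hb
    rw [hker, ← MonoidHom.card_fiber_eq_of_mem_range f (hT b hb.2) ⟨1, map_one f⟩, filter_filter]
    congr 1
    ext a
    simp only [mem_filter, mem_univ, true_and, and_iff_right_iff_imp]
    rintro rfl
    exact hb.2
  rw [card_eq_sum_card_fiberwise (f := f) (t := {b | T b}) (fun a ha => by simpa using ha),
    sum_congr rfl hfiber, sum_const, smul_eq_mul, mul_comm]

theorem orderOf_pow_eq_orderOf_iff {G : Type*} [Group G] [Finite G] (y : G) (k : ℕ) :
    orderOf (y ^ k) = orderOf y ↔ (orderOf y).Coprime k := by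
  rw [orderOf_pow, Nat.div_eq_self, or_iff_right (orderOf_pos y).ne']

theorem pow_iff_pow_of_modEq {G : Type*} [Group G] {S : G → Prop} {Q : ℕ}
    (hS : ∀ x y : G, S (x * y ^ Q) ↔ S x) {a b : ℕ} (hab : a ≡ b [MOD Q]) (x : G) :
    S (x ^ a) ↔ S (x ^ b) := by
  wlog hle : a ≤ b generalizing a b
  · exact (this hab.symm (le_of_not_ge hle)).symm
  obtain ⟨t, ht⟩ := (Nat.modEq_iff_dvd' hle).mp hab
  rw [show b = a + Q * t by omega, pow_add, pow_mul', hS]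

theorem card_filter_and_pow_eq {G : Type*} [Group G] [Fintype G] {S : G → Prop}
    [DecidablePred S] {Q e : ℕ} (hS : ∀ x y : G, S (x * y ^ Q) ↔ S x) (hQ : Q ∣ Nat.card G)
    (he : e.Coprime Q) (R : G → Prop) [DecidablePred R]
    (hR : ∀ u x, u.Coprime (Nat.card G) → (R (x ^ u) ↔ R x)) :
    #{x | R x ∧ S (x ^ e)} = #{x | R x ∧ S x} := by
  obtain ⟨u, hu, hue⟩ := Nat.exists_coprime_modEq Nat.card_pos.ne' hQ he
  refine card_equiv (powCoprime hu.symm) fun x => ?_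
  simp only [mem_filter, mem_univ, true_and, powCoprime_apply, hR u x hu,
    pow_iff_pow_of_modEq hS hue]

theorem orderOf_pow_eq_of_mul_eq_card {G : Type*} [Group G] [Fintype G] {α : G}
    (hα : ∀ x, x ∈ Subgroup.zpowers α) {N e : ℕ} (hNe : N * e = Nat.card G) :
    orderOf (α ^ e) = N := by
  have hαG := orderOf_eq_card_of_forall_mem_zpowers hα
  have he : e ≠ 0 := right_ne_zero_of_mul (hNe ▸ Nat.card_pos.ne')
  rw [orderOf_pow_of_dvd he (hαG ▸ Dvd.intro_left N hNe), hαG, ← hNe,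
    Nat.mul_div_cancel _ (Nat.pos_of_ne_zero he)]

theorem exists_pow_pow_eq_of_orderOf_eq {G : Type*} [Group G] [Fintype G] {α : G}
    (hα : ∀ x, x ∈ Subgroup.zpowers α) {N e : ℕ} (hNe : N * e = Nat.card G) {y : G}
    (hy : orderOf y = N) : ∃ k : ℕ, (α ^ e) ^ k = y := by
  have hαG := orderOf_eq_card_of_forall_mem_zpowers hα
  obtain ⟨k, rfl⟩ := (isOfFinOrder_of_finite α).mem_powers_iff_mem_zpowers.mpr (hα y)
  have hN : 0 < N := hy ▸ orderOf_pos _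
  have hgcd : (Nat.card G).gcd k = e := by
    rw [orderOf_pow, hαG] at hy
    apply Nat.eq_of_mul_eq_mul_left hN
    conv_rhs => rw [hNe, ← Nat.div_mul_cancel (Nat.gcd_dvd_left (Nat.card G) k), hy]
  obtain ⟨j, rfl⟩ : e ∣ k := hgcd ▸ Nat.gcd_dvd_right _ _
  exact ⟨j, (pow_mul α e j).symm⟩

theorem isNFree_iff_orderOf_pow_eq {G : Type} [Group G] [Fintype G] {α : G}
    (hα : ∀ x, x ∈ Subgroup.zpowers α) {N e : ℕ} (hNe : N * e = Nat.card G) (x : G) :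
    IsNFree α x N ↔ orderOf (x ^ e) = N := by
  have key : ∀ k : ℕ, orderOf ((α ^ k) ^ e) = N ↔ k.Coprime N := fun k => by
    rw [← pow_mul, mul_comm, pow_mul, ← orderOf_pow_eq_of_mul_eq_card hα hNe,
      orderOf_pow_eq_orderOf_iff, Nat.coprime_comm]
  constructor
  · rintro ⟨k, hk, rfl⟩
    exact (key k).mpr hk
  · intro hx
    obtain ⟨k, rfl⟩ := (isOfFinOrder_of_finite α).mem_powers_iff_mem_zpowers.mpr (hα x)
    exact ⟨k, (key k).mp hx, rfl⟩

theorem card_units_zmod_filter_pow {G : Type*} [Group G] [Fintype G] {β : G} {n : ℕ} [NeZero n]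
    (hβ : orderOf β = n) (hgen : ∀ y, orderOf y = n → ∃ k : ℕ, β ^ k = y) (T : G → Prop)
    [DecidablePred T] :
    #{v : (ZMod n)ˣ | T (β ^ (v : ZMod n).val)} = #{y | orderOf y = n ∧ T y} := by
  refine card_bij (fun v _ => β ^ (v : ZMod n).val) ?_ ?_ ?_
  · intro v hv
    simp only [mem_filter, mem_univ, true_and] at hv ⊢
    refine ⟨?_, hv⟩
    rw [Nat.Coprime.orderOf_pow (hβ ▸ (ZMod.val_coe_unit_coprime v).symm), hβ]
  · intro v _ w _ hvw
    rw [pow_eq_pow_iff_modEq, hβ, Nat.ModEq, Nat.mod_eq_of_lt (ZMod.val_lt _),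
      Nat.mod_eq_of_lt (ZMod.val_lt _)] at hvw
    exact Units.ext (ZMod.val_injective n hvw)
  · intro y hy
    simp only [mem_filter, mem_univ, true_and] at hy
    obtain ⟨k, rfl⟩ := hgen y hy.1
    have hk : k.Coprime n := by
      rw [← hβ, Nat.coprime_comm, ← orderOf_pow_eq_orderOf_iff]
      exact hy.1.trans hβ.symm
    refine ⟨ZMod.unitOfCoprime k hk, ?_, ?_⟩
    · simpa [ZMod.val_natCast, ← hβ, pow_mod_orderOf] using hy.2
    · simp [ZMod.val_natCast, ← hβ, pow_mod_orderOf]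

theorem card_generators_and_pow_mul_totient {G : Type*} [CommGroup G] [Fintype G]
    [IsCyclic G] {d e : ℕ} (hde : d * e = Nat.card G) (T : G → Prop) [DecidablePred T] :
    #{x | orderOf x = Nat.card G ∧ T (x ^ e)} * d.totient
      = (Nat.card G).totient * #{y | orderOf y = d ∧ T y} := by
  obtain ⟨α, hα⟩ := IsCyclic.exists_generator (α := G)
  set M := Nat.card G
  have hαM : orderOf α = M := orderOf_eq_card_of_forall_mem_zpowers hα
  have hαe : orderOf (α ^ e) = d := orderOf_pow_eq_of_mul_eq_card hα hde
  have hd : d ∣ M := Dvd.intro e hde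
  have : NeZero M := ⟨Nat.card_pos.ne'⟩
  have : NeZero d := ⟨hαe ▸ (orderOf_pos _).ne'⟩
  set f := ZMod.unitsMap hd
  have hf : ∀ u : (ZMod M)ˣ, (α ^ (u : ZMod M).val) ^ e = (α ^ e) ^ (f u : ZMod d).val := by
    intro u
    rw [ZMod.unitsMap_val, ZMod.cast_eq_val, ZMod.val_natCast, ← hαe, pow_mod_orderOf,
      ← pow_mul, ← pow_mul, mul_comm]
  have hsurj : ∀ v, v ∈ f.range := fun v => ZMod.unitsMap_surjective hd v
  have hgenerators : #{x | orderOf x = M ∧ T (x ^ e)}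
      = #{u : (ZMod M)ˣ | T ((α ^ e) ^ (f u : ZMod d).val)} := by
    simp only [← hf]
    refine (card_units_zmod_filter_pow hαM (fun y _ => ?_) (fun x => T (x ^ e))).symm
    exact (isOfFinOrder_of_finite α).mem_powers_iff_mem_zpowers.mpr (hα y)
  have horder := card_units_zmod_filter_pow hαe
    (fun y hy => exists_pow_pow_eq_of_orderOf_eq hα hde hy) T
  have htotient := f.card_filter_comp_eq (fun _ => True) (fun v _ => hsurj v)
  rw [filter_true, filter_true, card_univ, card_univ, ZMod.card_units_eq_totient,
    ZMod.card_units_eq_totient] at htotient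
  rw [hgenerators, f.card_filter_comp_eq (fun v => T ((α ^ e) ^ (v : ZMod d).val))
    (fun v _ => hsurj v), horder, htotient]
  ring

section InvariantPredicate

variable {G : Type} [CommGroup G] [Fintype G] {S : G → Prop} [DecidablePred S] {Q e : ℕ}

theorem card_isNFree_and_eq {α : G} (hα : ∀ x, x ∈ Subgroup.zpowers α)
    (hS : ∀ x y : G, S (x * y ^ Q) ↔ S x) {N : ℕ} (hNe : N * e = Nat.card G)
    (he : e.Coprime Q) (hQN : Q ∣ N) :
    #{x | IsNFree α x N ∧ S x} = e * #{y | orderOf y = N ∧ S y} := by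
  have : IsCyclic G := ⟨α, fun x => Subgroup.mem_zpowers_iff.mp (hα x)⟩
  have hR : ∀ (u : ℕ) (x : G), u.Coprime (Nat.card G) →
      (orderOf ((x ^ u) ^ e) = N ↔ orderOf (x ^ e) = N) := fun u x hu => by
    rw [pow_right_comm, (hu.symm.coprime_dvd_left (orderOf_dvd_natCard _)).orderOf_pow]
  have hrange : ∀ y, orderOf y = N ∧ S y → y ∈ (powMonoidHom e : G →* G).range := fun y hy => by
    obtain ⟨k, hk⟩ := exists_pow_pow_eq_of_orderOf_eq hα hNe hy.1
    exact ⟨α ^ k, by rw [powMonoidHom_apply, pow_right_comm, hk]⟩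
  calc #{x | IsNFree α x N ∧ S x} = #{x | orderOf (x ^ e) = N ∧ S x} := by
        simp only [isNFree_iff_orderOf_pow_eq hα hNe]
    _ = #{x | orderOf (x ^ e) = N ∧ S (x ^ e)} :=
        (card_filter_and_pow_eq hS (hQN.trans (Dvd.intro e hNe)) he _ hR).symm
    _ = e * #{y | orderOf y = N ∧ S y} := by
        simpa only [powMonoidHom_apply, IsCyclic.card_powMonoidHom_ker,
          Nat.gcd_eq_right (Dvd.intro_left N hNe)] using
          (powMonoidHom e).card_filter_comp_eq (fun y => orderOf y = N ∧ S y) hrange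

theorem card_generators_and_mul_totient [IsCyclic G] (hS : ∀ x y : G, S (x * y ^ Q) ↔ S x)
    {d : ℕ} (hde : d * e = Nat.card G) (he : e.Coprime Q) (hQd : Q ∣ d) :
    #{x | orderOf x = Nat.card G ∧ S x} * d.totient
      = (Nat.card G).totient * #{y | orderOf y = d ∧ S y} := by
  rw [← card_filter_and_pow_eq hS (hQd.trans (Dvd.intro e hde)) he _ fun u x hu => by
    rw [(hu.symm.coprime_dvd_left (orderOf_dvd_natCard x)).orderOf_pow]]
  exact card_generators_and_pow_mul_totient hde S

end InvariantPredicate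

theorem trace_mul_pow_eq_zero_iff {K L : Type*} [Field K] [Fintype K] [Field L] [Fintype L]
    [Algebra K L] (x y : Lˣ) :
    Algebra.trace K L ((x * y ^ ((Fintype.card L - 1) / (Fintype.card K - 1)) : Lˣ) : L) = 0
      ↔ Algebra.trace K L (x : L) = 0 := by
  let H := (Units.map (algebraMap K L : K →* L)).range
  have hH : Nat.card H = Fintype.card K - 1 := by
    rw [Nat.card_eq_fintype_card, ← Fintype.card_units]
    exact Fintype.card_coeSort_range (Units.map_injective (algebraMap K L).injective)
  have hindex : H.index = (Fintype.card L - 1) / (Fintype.card K - 1) := by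
    refine Nat.eq_div_of_mul_eq_right (by have := Fintype.one_lt_card (α := K); omega) ?_
    rw [← hH, H.card_mul_index, Nat.card_eq_fintype_card, Fintype.card_units]
  obtain ⟨b, hb⟩ := hindex ▸ H.pow_index_mem y
  rw [← hb, Units.val_mul, Units.coe_map, MonoidHom.coe_coe, mul_comm, ← Algebra.smul_def,
    map_smul, smul_eq_mul, mul_eq_zero, or_iff_right b.ne_zero]

theorem stmt_17_general (m q Q D N : ℕ)
    (hQ : Q = (q ^ m - 1) / (q - 1))
    (K L : Type) [Field K] [Fintype K] [Field L] [Fintype L] [Algebra K L]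
    (hK : Fintype.card K = q) (hL : Fintype.card L = q ^ m)
    (α : Lˣ) (hα : ∀ x : Lˣ, x ∈ Subgroup.zpowers α)
    (hD2 : Nat.Coprime ((q - 1) / D) Q)
    (hN : N ∣ q ^ m - 1) (hDQN : D * Q ∣ N) :
    Zcount K L α N (0 : K) = ((q ^ m - 1) / N) * Pcount K L N (0 : K) ∧
    (Pcount K L (q ^ m - 1) (0 : K) : ℚ) =
      ((Nat.totient (q ^ m - 1) : ℚ) / (Nat.totient (D * Q) : ℚ)) *
        (Pcount K L (D * Q) (0 : K) : ℚ) := by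
  have hS : ∀ x y : Lˣ, Algebra.trace K L ((x * y ^ Q : Lˣ) : L) = 0
      ↔ Algebra.trace K L (x : L) = 0 := by
    rw [hQ, ← hL, ← hK]
    exact trace_mul_pow_eq_zero_iff
  have hcard : Nat.card Lˣ = q ^ m - 1 := by
    rw [Nat.card_eq_fintype_card, Fintype.card_units, hL]
  have hQM : Q * (q - 1) = q ^ m - 1 :=
    hQ ▸ Nat.div_mul_cancel (by simpa using Nat.sub_dvd_pow_sub_pow q 1 m)
  have hM0 : 0 < q ^ m - 1 := by
    have := Fintype.one_lt_card (α := L)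
    omega
  have hcop : ∀ N', D * Q ∣ N' → N' ∣ q ^ m - 1 → ((q ^ m - 1) / N').Coprime Q :=
    fun N' hDQN' hN' => Nat.coprime_of_mul_dvd_of_mul_eq hD2 (by rintro rfl; omega) hDQN'
      (by rw [Nat.mul_div_cancel' hN', hQM])
  have : IsCyclic Lˣ := ⟨α, fun x => Subgroup.mem_zpowers_iff.mp (hα x)⟩
  have hDQ : D * Q ∣ q ^ m - 1 := hDQN.trans hN
  simp only [Zcount, Pcount, Set.ncard_eq_toFinset_card', Set.toFinset_ofPred]
  refine ⟨card_isNFree_and_eq hα hS (by rw [Nat.mul_div_cancel' hN, hcard]) (hcop N hDQN hN)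
    ((dvd_mul_left Q D).trans hDQN), ?_⟩
  have hgen := card_generators_and_mul_totient
    (S := fun x : Lˣ => Algebra.trace K L (x : L) = 0) hS (by rw [Nat.mul_div_cancel' hDQ, hcard])
    (hcop _ dvd_rfl hDQ) (dvd_mul_left Q D)
  have hφ : ((D * Q).totient : ℚ) ≠ 0 := by
    exact_mod_cast (Nat.totient_pos.mpr (Nat.pos_of_dvd_of_pos hDQ hM0)).ne'
  rw [hcard] at hgen
  rw [div_mul_eq_mul_div, eq_div_iff hφ]
  exact_mod_cast hgen

/-- relation between `Z_{q,m,N}(0)` and `P_{q,m,N}(0)` when `DQ ∣ N`. -/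
theorem stmt_17 (p s m q Q D N : ℕ) [Fact p.Prime] (hs : 0 < s) (hm : 0 < m)
    (hq : q = p ^ s) (hQ : Q = (q ^ m - 1) / (q - 1))
    (K L : Type) [Field K] [Fintype K] [Field L] [Fintype L] [Algebra K L]
    (hK : Fintype.card K = q) (hL : Fintype.card L = q ^ m)
    (α : Lˣ) (hα : ∀ x : Lˣ, x ∈ Subgroup.zpowers α)
    (hD0 : 0 < D) (hD1 : D ∣ q - 1) (hD2 : Nat.Coprime ((q - 1) / D) Q)
    (hDmin : ∀ D' : ℕ, 0 < D' → D' ∣ q - 1 → Nat.Coprime ((q - 1) / D') Q → D ≤ D')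
    (hN : N ∣ q ^ m - 1) (hDQN : D * Q ∣ N) :
    Zcount K L α N (0 : K) = ((q ^ m - 1) / N) * Pcount K L N (0 : K) ∧
    (Pcount K L (q ^ m - 1) (0 : K) : ℚ) =
      ((Nat.totient (q ^ m - 1) : ℚ) / (Nat.totient (D * Q) : ℚ)) *
        (Pcount K L (D * Q) (0 : K) : ℚ) :=
  stmt_17_general m q Q D N hQ K L hK hL α hα hD2 hN hDQN
end

section
/- Let p be a Mersenne prime and Q = (p^4 - 1)/(p - 1) = (p + 1)(p^2 + 1). Then the number of elements of F_{p^4}^* with multiplicative order exactly 2Q and absolute trace Tr_{F_{p^4}/F_p} equal to 0 is φ(2Q)/(p + 1) = 2·φ(p^2 + 1). -/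
open scoped BigOperators
open scoped Classical

/-!
Write `p + 1 = 2 ^ ℓ` and `p ^ 2 + 1 = 2 * u` with `u` odd, so that the order
`N = 2 ^ (ℓ + 2) * u` splits into coprime parts and every element of order `N` is uniquely
`ζ * ω` with `ord ζ = 2 ^ (ℓ + 2)` and `ord ω = u`. Because `p ^ 2 ≡ 1 + 2 ^ (ℓ + 1)` modulo
`2 ^ (ℓ + 2)` and `p ^ 2 ≡ -1` modulo `u`, Frobenius squared sends `ζ * ω` to `-ζ * ω⁻¹`; hence
`Tr (ζ * ω) = t + t ^ p` with `t = ζ * (ω - ω⁻¹)`, which vanishes iff `t ^ (p - 1) = -1`.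
For fixed `ω` this prescribes `ζ ^ (p - 1)` as a square whose `(p + 1)`-th power is `-1`, and since
`gcd (p - 1, 2 ^ (ℓ + 2)) = 2` exactly two `ζ` of order `2 ^ (ℓ + 2)` satisfy it. So the count is
`2 * φ u = 2 * φ (p ^ 2 + 1)`, while `φ N = 2 ^ (ℓ + 1) * φ u`.
-/

open Finset

theorem Units.neg_one_ne_one_of_ringChar_ne_two {R : Type*} [Ring R] [Nontrivial R]
    (hR : ringChar R ≠ 2) : (-1 : Rˣ) ≠ 1 :=
  fun h => Ring.neg_one_ne_one_of_char_ne_two hR (by simpa using congrArg Units.val h)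

theorem Units.orderOf_eq_two_pow_succ_iff {R : Type*} [Ring R] [NoZeroDivisors R] [Nontrivial R]
    (hR : ringChar R ≠ 2) (ζ : Rˣ) (k : ℕ) : orderOf ζ = 2 ^ (k + 1) ↔ ζ ^ 2 ^ k = -1 := by
  constructor
  · intro h
    have h2 : orderOf (ζ ^ 2 ^ k) = 2 := by
      rw [orderOf_pow_of_dvd (by positivity) (h ▸ pow_dvd_pow 2 k.le_succ), h, pow_succ,
        Nat.mul_div_cancel_left _ (by positivity)]
    rw [← orderOf_units, CharP.orderOf_eq_two_iff _ hR] at h2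
    exact Units.ext (by simpa using h2)
  · intro h
    exact orderOf_eq_prime_pow (h ▸ Units.neg_one_ne_one_of_ringChar_ne_two hR)
      (by rw [pow_succ, pow_mul, h, neg_one_sq])

theorem Nat.exists_odd_eq_two_mul_add_one {p n : ℕ} (hp : p + 1 = 2 ^ n) (hn : 2 ≤ n) :
    ∃ v, Odd v ∧ p = 2 * v + 1 := by
  obtain ⟨k, rfl⟩ := Nat.exists_eq_add_of_le' hn
  have hk : 1 ≤ 2 ^ k := Nat.one_le_two_pow
  refine ⟨2 * 2 ^ k - 1, ⟨2 ^ k - 1, by omega⟩, ?_⟩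
  rw [pow_add] at hp
  omega

theorem Nat.odd_of_sq_add_one_eq_two_mul {p u : ℕ} (hp : Odd p) (hu : p ^ 2 + 1 = 2 * u) :
    Odd u := by
  obtain ⟨k, rfl⟩ := hp
  exact ⟨k ^ 2 + k, by linarith⟩

theorem pow_sq_eq_neg_of_pow_two_pow_eq_neg_one {M : Type*} [Monoid M] [HasDistribNeg M]
    {p n : ℕ} (hp : p + 1 = 2 ^ n) (hn : 2 ≤ n) {ζ : M} (hζ : ζ ^ 2 ^ (n + 1) = -1) :
    ζ ^ p ^ 2 = -ζ := by
  obtain ⟨v, hv, rfl⟩ := Nat.exists_odd_eq_two_mul_add_one hp hn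
  have hsq : (2 * v + 1) ^ 2 = 2 ^ (n + 1) * v + 1 := by rw [pow_succ 2 n, ← hp]; ring
  rw [hsq, pow_succ, pow_mul, hζ, hv.neg_one_pow, neg_one_mul]

section Trace

variable {K L : Type*} [Field K] [Fintype K] [Field L] [Fintype L] [Algebra K L]
  {p : ℕ} [Fact p.Prime] [CharP L p]

theorem algebraMap_trace_eq_of_finrank_eq_four (hK : Fintype.card K = p)
    (hKL : Module.finrank K L = 4) (x : L) :
    algebraMap K L (Algebra.trace K L x) = (x + x ^ p ^ 2) + (x + x ^ p ^ 2) ^ p := by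
  rw [FiniteField.algebraMap_trace_eq_sum_pow, Nat.card_eq_fintype_card, hK, hKL, add_pow_char,
    ← pow_mul, ← pow_succ]
  simp only [sum_range_succ, sum_range_zero]
  ring

theorem trace_eq_zero_iff_of_finrank_eq_four (hK : Fintype.card K = p)
    (hKL : Module.finrank K L = 4) {x : L} (hx : x + x ^ p ^ 2 ≠ 0) :
    Algebra.trace K L x = 0 ↔ (x + x ^ p ^ 2) ^ (p - 1) = -1 := by
  rw [← (algebraMap K L).injective.eq_iff, map_zero, algebraMap_trace_eq_of_finrank_eq_four hK hKL]
  set t := x + x ^ p ^ 2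
  have hfactor : t + t ^ p = t * (1 + t ^ (p - 1)) := by
    rw [mul_add, mul_one, ← pow_succ', Nat.sub_add_cancel (Fact.out : p.Prime).one_le]
  rw [hfactor, mul_eq_zero, or_iff_right hx, add_eq_zero_iff_neg_eq, eq_comm]

end Trace

theorem Nat.eq_and_eq_of_dvd_of_mul_eq {a b m n : ℕ} (ha : a ∣ m) (hb : b ∣ n)
    (h : a * b = m * n) (hmn : 0 < m * n) : a = m ∧ b = n := by
  obtain ⟨c, rfl⟩ := ha
  obtain ⟨d, rfl⟩ := hb
  have hab : 0 < a * b := h ▸ hmn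
  have hcd : c * d = 1 := by
    apply Nat.eq_of_mul_eq_mul_left hab
    linarith [show a * c * (b * d) = a * b * (c * d) by ring]
  simp [Nat.eq_one_of_mul_eq_one_right hcd, Nat.eq_one_of_mul_eq_one_left hcd]

theorem card_filter_orderOf_mul_eq_sum {G : Type*} [CommGroup G] [Fintype G] {m n : ℕ}
    (hmn : m.Coprime n) (P : G → Prop) :
    #{ξ : G | orderOf ξ = m * n ∧ P ξ} =
      ∑ ω : G with orderOf ω = n, #{ζ : G | orderOf ζ = m ∧ P (ζ * ω)} := by
  rw [← card_sigma]
  symm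
  refine card_bij (fun x _ => x.2 * x.1) ?_ ?_ ?_
  · rintro ⟨ω, ζ⟩ h
    simp only [mem_sigma, mem_filter, mem_univ, true_and] at h ⊢
    refine ⟨?_, h.2.2⟩
    rw [(Commute.all ζ ω).orderOf_mul_eq_mul_orderOf_of_coprime (by rw [h.1, h.2.1]; exact hmn),
      h.1, h.2.1]
  · rintro ⟨ω, ζ⟩ h ⟨ω', ζ'⟩ h' heq
    simp only [mem_sigma, mem_filter, mem_univ, true_and] at h h' heq
    have hρ : ζ'⁻¹ * ζ = ω' * ω⁻¹ := by
      rw [inv_mul_eq_iff_eq_mul, ← mul_assoc, ← heq]; group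
    have hρ1 : ζ'⁻¹ * ζ = 1 := by
      refine (pow_eq_one_iff_of_coprime hmn).1 ⟨?_, ?_⟩
      · rw [mul_pow, inv_pow, ← h.2.1, pow_orderOf_eq_one, h.2.1, ← h'.2.1, pow_orderOf_eq_one,
          inv_one, one_mul]
      · rw [hρ, mul_pow, inv_pow, ← h.1, pow_orderOf_eq_one, h.1, ← h'.1, pow_orderOf_eq_one,
          inv_one, mul_one]
    have hζ : ζ = ζ' := (inv_mul_eq_one.1 hρ1).symm
    subst hζ
    have hω : ω = ω' := mul_left_cancel heq
    subst hω
    rfl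
  · intro ξ hξ
    simp only [mem_filter, mem_univ, true_and] at hξ
    obtain ⟨x, y, hxy⟩ := Nat.isCoprime_iff_coprime.2 hmn
    set ω := ξ ^ (x * m)
    set ζ := ξ ^ (y * n)
    have hξ_eq : ζ * ω = ξ := by rw [← zpow_add, add_comm, hxy, zpow_one]
    have hω_dvd : orderOf ω ∣ n := by
      rw [← Int.natCast_dvd_natCast, orderOf_dvd_iff_zpow_eq_one, ← zpow_mul,
        ← orderOf_dvd_iff_zpow_eq_one, hξ.1]
      exact ⟨x, by push_cast; ring⟩
    have hζ_dvd : orderOf ζ ∣ m := by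
      rw [← Int.natCast_dvd_natCast, orderOf_dvd_iff_zpow_eq_one, ← zpow_mul,
        ← orderOf_dvd_iff_zpow_eq_one, hξ.1]
      exact ⟨y, by push_cast; ring⟩
    have hord : orderOf ζ * orderOf ω = m * n := by
      rw [← (Commute.all ζ ω).orderOf_mul_eq_mul_orderOf_of_coprime
        ((hmn.coprime_dvd_left hζ_dvd).coprime_dvd_right hω_dvd), hξ_eq, hξ.1]
    obtain ⟨hζm, hωn⟩ := Nat.eq_and_eq_of_dvd_of_mul_eq hζ_dvd hω_dvd hord (hξ.1 ▸ orderOf_pos ξ)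
    refine ⟨⟨ω, ζ⟩, ?_, hξ_eq⟩
    simp only [mem_sigma, mem_filter, mem_univ, true_and]
    exact ⟨hωn, hζm, hξ_eq ▸ hξ.2⟩

theorem neg_inv_pow_sub_one_pow_succ_eq_neg_one {G : Type*} [Group G] [HasDistribNeg G] {p : ℕ}
    (hp : Odd p) {s : G} (hs : s ^ p ^ 2 = -s) : (-(s ^ (p - 1))⁻¹) ^ (p + 1) = -1 := by
  have hsq : p ^ 2 = (p - 1) * (p + 1) + 1 := by
    obtain ⟨k, rfl⟩ := hp
    rw [Nat.add_sub_cancel]; ring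
  have hs' : s ^ ((p - 1) * (p + 1)) = -1 := by
    rw [hsq, pow_succ, ← neg_one_mul s] at hs
    exact mul_right_cancel hs
  rw [(hp.add_one).neg_pow, inv_pow, ← pow_mul, hs', inv_neg_one]

section FiberCount

variable {L : Type*} [Field L] [Fintype L] {p n : ℕ} [CharP L p]

theorem exists_orderOf_eq_and_pow_sub_one_eq (hL : Fintype.card L = p ^ 4)
    (hp : p + 1 = 2 ^ n) (hn : 2 ≤ n) {b : Lˣ} (hb : b ^ (p + 1) = -1) :
    ∃ ζ : Lˣ, orderOf ζ = 2 ^ (n + 2) ∧ ζ ^ (p - 1) = b := by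
  obtain ⟨v, hv, rfl⟩ := Nat.exists_odd_eq_two_mul_add_one hp hn
  have hchar : ringChar L ≠ 2 := by rw [ringChar.eq L (2 * v + 1)]; omega
  -- `#L / 2` is an even multiple of `p + 1`, so `b ^ (#L / 2) = 1` and `b` is a square
  have hhalf : Fintype.card L / 2 = (2 * v + 1 + 1) * (2 * (v * (2 * v ^ 2 + 2 * v + 1))) := by
    rw [hL, show (2 * v + 1) ^ 4 = 2 * ((2 * v + 1 + 1) * (2 * (v * (2 * v ^ 2 + 2 * v + 1)))) + 1
      by ring, Nat.mul_add_div two_pos]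
    norm_num
  obtain ⟨r, rfl⟩ : IsSquare b := by
    rw [FiniteField.unit_isSquare_iff hchar, hhalf, pow_mul, hb, (even_two_mul _).neg_one_pow]
  have hr : orderOf r = 2 ^ (n + 2) := by
    rw [Units.orderOf_eq_two_pow_succ_iff hchar, pow_succ', pow_mul, sq, ← hp, hb]
  obtain ⟨c, hc⟩ := exists_pow_eq_self_of_coprime (x := r) (n := v)
    (hr ▸ Nat.Coprime.pow_right _ (Nat.coprime_two_right.2 hv))
  have hζv : (r ^ c) ^ v = r := by rw [← pow_mul, mul_comm, pow_mul, hc]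
  refine ⟨r ^ c, Nat.dvd_antisymm (hr ▸ orderOf_pow_dvd c) ?_, ?_⟩
  · have := orderOf_pow_dvd (x := r ^ c) v
    rwa [hζv, hr] at this
  · rw [Nat.add_sub_cancel, mul_comm, pow_mul, hζv, sq]

theorem card_orderOf_eq_and_pow_sub_one_eq (hL : Fintype.card L = p ^ 4)
    (hp : p + 1 = 2 ^ n) (hn : 2 ≤ n) {b : Lˣ} (hb : b ^ (p + 1) = -1) :
    #{ζ : Lˣ | orderOf ζ = 2 ^ (n + 2) ∧ ζ ^ (p - 1) = b} = 2 := by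
  obtain ⟨ζ₀, hζ₀, hζ₀b⟩ := exists_orderOf_eq_and_pow_sub_one_eq hL hp hn hb
  obtain ⟨v, hv, rfl⟩ := Nat.exists_odd_eq_two_mul_add_one hp hn
  have hchar : ringChar L ≠ 2 := by rw [ringChar.eq L (2 * v + 1)]; omega
  rw [Nat.add_sub_cancel] at hζ₀b ⊢
  rw [card_eq_two]
  refine ⟨ζ₀, -ζ₀, fun h => Units.neg_one_ne_one_of_ringChar_ne_two hchar ?_, ?_⟩
  · rw [← neg_one_mul ζ₀] at h
    exact (mul_right_cancel ((one_mul ζ₀).trans h)).symm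
  ext ζ
  simp only [mem_filter, mem_univ, true_and, mem_insert, mem_singleton]
  constructor
  · rintro ⟨hζ, hζb⟩
    -- `ζ / ζ₀` is killed by both `2 * v` and `2 ^ (n + 2)`, whose gcd is `2`
    have hρ : (ζ * ζ₀⁻¹) ^ 2 = 1 := by
      have hgcd : (2 * v).gcd (2 ^ (n + 2)) = 2 := by
        rw [pow_succ', Nat.gcd_mul_left,
          Nat.Coprime.pow_right _ (Nat.coprime_two_right.2 hv), mul_one]
      rw [← hgcd, pow_gcd_eq_one, mul_pow, mul_pow, inv_pow, inv_pow, hζb, hζ₀b, ← hζ₀,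
        pow_orderOf_eq_one, hζ₀, ← hζ, pow_orderOf_eq_one]
      simp
    rcases sq_eq_one_iff.1 (congrArg Units.val hρ) with h | h
    · exact Or.inl (mul_inv_eq_one.1 (Units.val_eq_one.1 h))
    · refine Or.inr (neg_one_mul ζ₀ ▸ mul_inv_eq_iff_eq_mul.1 (Units.ext ?_))
      rw [h, Units.val_neg, Units.val_one]
  · rintro (rfl | rfl)
    · exact ⟨hζ₀, hζ₀b⟩
    · refine ⟨?_, by rw [(even_two_mul v).neg_pow, hζ₀b]⟩
      rw [Units.orderOf_eq_two_pow_succ_iff hchar] at hζ₀ ⊢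
      rwa [(Nat.even_pow.2 ⟨even_two, by omega⟩).neg_pow]

end FiberCount

theorem card_orderOf_eq_and_trace_mul_eq_zero {K L : Type*} [Field K] [Fintype K] [Field L]
    [Fintype L] [Algebra K L] {p n : ℕ} [Fact p.Prime] [CharP L p] (hK : Fintype.card K = p)
    (hL : Fintype.card L = p ^ 4) (hp : p + 1 = 2 ^ n) (hn : 2 ≤ n) {ω : Lˣ}
    (hω : ω ^ (p ^ 2 + 1) = 1) (hω2 : ω ^ 2 ≠ 1) :
    #{ζ : Lˣ | orderOf ζ = 2 ^ (n + 2) ∧ Algebra.trace K L ((ζ * ω : Lˣ) : L) = 0} = 2 := by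
  have hKL : Module.finrank K L = 4 := Nat.pow_right_injective (Fact.out : p.Prime).two_le
    (show p ^ _ = p ^ 4 by rw [← hL, ← hK, Module.card_eq_pow_finrank (K := K) (V := L)])
  obtain ⟨v, hv, hpv⟩ := Nat.exists_odd_eq_two_mul_add_one hp hn
  have hchar : ringChar L ≠ 2 := by rw [ringChar.eq L p]; omega
  have hωp : ω ^ p ^ 2 = ω⁻¹ := eq_inv_of_mul_eq_one_left (by rw [← pow_succ, hω])
  have hs0 : (ω : L) - ω⁻¹ ≠ 0 := by
    refine sub_ne_zero.2 fun h => hω2 (Units.ext ?_)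
    rw [Units.val_pow_eq_pow_val, sq, Units.val_one]
    nth_rewrite 2 [h]
    exact Units.mul_inv ω
  set s : Lˣ := Units.mk0 _ hs0
  have hs : s ^ p ^ 2 = -s := by
    ext
    simp only [s, Units.val_pow_eq_pow_val, Units.val_neg, Units.val_mk0, sub_pow_char_pow]
    rw [← Units.val_pow_eq_pow_val, ← Units.val_pow_eq_pow_val, inv_pow, hωp, inv_inv, neg_sub]
  have htrace : ∀ ζ : Lˣ, orderOf ζ = 2 ^ (n + 2) →
      (Algebra.trace K L ((ζ * ω : Lˣ) : L) = 0 ↔ ζ ^ (p - 1) = -(s ^ (p - 1))⁻¹) := by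
    intro ζ hζ
    have hζp : ζ ^ p ^ 2 = -ζ := pow_sq_eq_neg_of_pow_two_pow_eq_neg_one hp hn
      ((Units.orderOf_eq_two_pow_succ_iff hchar ζ (n + 1)).1 hζ)
    have ht : ((ζ * ω : Lˣ) : L) + ((ζ * ω : Lˣ) : L) ^ p ^ 2 = ((ζ * s : Lˣ) : L) := by
      rw [← Units.val_pow_eq_pow_val, mul_pow, hζp, hωp]
      simp only [s, Units.val_mul, Units.val_neg, Units.val_mk0]
      ring
    rw [trace_eq_zero_iff_of_finrank_eq_four hK hKL (ht ▸ Units.ne_zero _), ht,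
      ← Units.val_pow_eq_pow_val, ← neg_one_mul (s ^ (p - 1))⁻¹, eq_mul_inv_iff_mul_eq, ← mul_pow,
      Units.ext_iff, Units.val_neg, Units.val_one]
  rw [filter_congr fun ζ _ => and_congr_right (htrace ζ)]
  exact card_orderOf_eq_and_pow_sub_one_eq hL hp hn
    (neg_inv_pow_sub_one_pow_succ_eq_neg_one ⟨v, hpv⟩ hs)

theorem Pcount_two_pow_mul_zero_eq_two_mul_totient (K L : Type) [Field K] [Fintype K] [Field L]
    [Fintype L] [Algebra K L] {p n u : ℕ} [Fact p.Prime] [CharP L p] (hK : Fintype.card K = p)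
    (hL : Fintype.card L = p ^ 4) (hp : p + 1 = 2 ^ n) (hn : 2 ≤ n) (hu : p ^ 2 + 1 = 2 * u) :
    Pcount K L (2 ^ (n + 2) * u) 0 = 2 * Nat.totient u := by
  obtain ⟨v, hv, hpv⟩ := Nat.exists_odd_eq_two_mul_add_one hp hn
  have hu_odd : Odd u := Nat.odd_of_sq_add_one_eq_two_mul ⟨v, hpv⟩ hu
  have hu_gt : 2 < u := by have := hv.pos; nlinarith
  have hu_dvd : u ∣ Fintype.card Lˣ := by
    rw [Fintype.card_units, hL, show p ^ 4 - 1 = (p ^ 2) ^ 2 - 1 ^ 2 by ring_nf, Nat.sq_sub_sq, hu,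
      mul_assoc]
    exact dvd_mul_of_dvd_right (dvd_mul_right u _) 2
  rw [Pcount, Set.ncard_eq_toFinset_card', Set.toFinset_ofPred,
    card_filter_orderOf_mul_eq_sum (Nat.Coprime.pow_left _ (Nat.coprime_two_left.2 hu_odd)),
    sum_congr rfl fun ω hω => ?_, sum_const, smul_eq_mul, IsCyclic.card_orderOf_eq_totient hu_dvd,
    mul_comm]
  have hω : orderOf ω = u := (mem_filter.1 hω).2
  refine card_orderOf_eq_and_trace_mul_eq_zero hK hL hp hn
    (orderOf_dvd_iff_pow_eq_one.1 (hω ▸ hu ▸ dvd_mul_left u 2)) fun h => ?_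
  have := Nat.le_of_dvd two_pos (hω ▸ orderOf_dvd_of_pow_eq_one h)
  omega

/-- elements of order `2(p+1)(p²+1)` with absolute trace zero in `F_{p⁴}`,
`p` a Mersenne prime. -/
theorem stmt_19 (p : ℕ) [Fact p.Prime] (hmer : ∃ ℓ : ℕ, ℓ.Prime ∧ p = 2 ^ ℓ - 1)
    (K L : Type) [Field K] [Fintype K] [Field L] [Fintype L] [Algebra K L]
    (hK : Fintype.card K = p) (hL : Fintype.card L = p ^ 4) :
    (Pcount K L (2 * ((p + 1) * (p ^ 2 + 1))) (0 : K) : ℚ) =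
      (Nat.totient (2 * ((p + 1) * (p ^ 2 + 1))) : ℚ) / ((p : ℚ) + 1) ∧
    Pcount K L (2 * ((p + 1) * (p ^ 2 + 1))) (0 : K) = 2 * Nat.totient (p ^ 2 + 1) := by
  obtain ⟨ℓ, hℓ, hpℓ⟩ := hmer
  have hp : p + 1 = 2 ^ ℓ := by have := Nat.one_le_two_pow (n := ℓ); omega
  obtain ⟨v, -, hpv⟩ := Nat.exists_odd_eq_two_mul_add_one hp hℓ.two_le
  obtain ⟨u, hu⟩ : ∃ u, p ^ 2 + 1 = 2 * u := ⟨2 * v ^ 2 + 2 * v + 1, by rw [hpv]; ring⟩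
  have hu_odd : Odd u := Nat.odd_of_sq_add_one_eq_two_mul ⟨v, hpv⟩ hu
  have hN : 2 * ((p + 1) * (p ^ 2 + 1)) = 2 ^ (ℓ + 2) * u := by rw [hp, hu]; ring
  have : CharP K p := charP_of_card_eq_prime hK
  have : CharP L p := charP_of_injective_algebraMap' K p
  have hcount := Pcount_two_pow_mul_zero_eq_two_mul_totient K L hK hL hp hℓ.two_le hu
  have hφu : Nat.totient (p ^ 2 + 1) = Nat.totient u := by
    rw [hu, Nat.totient_mul (Nat.coprime_two_left.2 hu_odd), Nat.totient_two, one_mul]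
  have hφN : Nat.totient (2 ^ (ℓ + 2) * u) = 2 ^ (ℓ + 1) * Nat.totient u := by
    rw [Nat.totient_mul (Nat.Coprime.pow_left _ (Nat.coprime_two_left.2 hu_odd)),
      Nat.totient_prime_pow Nat.prime_two (by omega)]
    simp
  rw [hN, hcount, hφu, hφN, show (p : ℚ) + 1 = 2 ^ ℓ by exact_mod_cast hp]
  refine ⟨?_, rfl⟩
  push_cast
  field_simp
  ring
end
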